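/- Let E be a Banach space, n ∈ ℕ, T₁, …, Tₙ ∈ 𝒜(E) approximable operators, and let I be the closed left ideal of 𝒜(E) generated topologically by T₁, …, Tₙ. Then E′ ∘ I := ⋃_{T ∈ I} im T′ equals the closed linear span of im T₁′ + ⋯ + im Tₙ′ in E′. -/

import Mathlib

/-!
For `l ∈ E′` the map `S ↦ l ∘ S` is continuous and linear and sends `a ∘ Tᵢ + s • Tᵢ` to
`(l ∘ a) ∘ Tᵢ + s • l ∘ Tᵢ`, which gives `⊆`. Conversely, write `μ ⊗ e = μ(·) • e`. For
`e ≠ 0` and `g ∈ E′` with `g e = 1` every `μ ∈ E′` factors as `μ = g ∘ (μ ⊗ e)`. The map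
`μ ↦ μ ⊗ e` is continuous and linear and sends `l ∘ Tᵢ` to `(l ⊗ e) ∘ Tᵢ` with `l ⊗ e` of
rank one, so `μ ⊗ e ∈ I` as soon as `μ` lies in the closed span of the `im Tᵢ′`.
-/

variable {E : Type*} [NormedAddCommGroup E] [NormedSpace ℂ E] [CompleteSpace E]

/-- The algebra `𝒜(E)` of approximable operators: the norm closure of the finite-rank operators
in `B(E)`. -/
def ApproxOps (E : Type*) [NormedAddCommGroup E] [NormedSpace ℂ E] : Set (E →L[ℂ] E) :=
  closure {T : E →L[ℂ] E | FiniteDimensional ℂ (LinearMap.range (T : E →ₗ[ℂ] E))}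

/-- The image of the adjoint (Banach-space transpose) `T′ : E′ → E′`, `λ ↦ λ ∘ T`. -/
def imAdj (T : E →L[ℂ] E) : Set (StrongDual ℂ E) :=
  Set.range fun l : StrongDual ℂ E => l.comp T

section

variable {X : Type*} [NormedAddCommGroup X] [NormedSpace ℂ X]

variable (X) in
noncomputable def approxOpsSubmodule : Submodule ℂ (X →L[ℂ] X) :=
  ((LinearMap.finiteRange ℂ X X).comap (ContinuousLinearMap.coeLM ℂ)).topologicalClosure

theorem coe_approxOpsSubmodule : (approxOpsSubmodule X : Set (X →L[ℂ] X)) = ApproxOps X := by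
  simp only [approxOpsSubmodule, Submodule.topologicalClosure_coe, ApproxOps]
  congr! 1
  ext T
  exact IsNoetherian.iff_fg

theorem smulRight_mem_approxOpsSubmodule (l : StrongDual ℂ X) (e : X) :
    l.smulRight e ∈ approxOpsSubmodule X := by
  rw [← SetLike.mem_coe, coe_approxOpsSubmodule]
  refine subset_closure (Submodule.finiteDimensional_of_le (S₂ := ℂ ∙ e) ?_)
  rintro _ ⟨x, rfl⟩
  exact Submodule.smul_mem _ _ (Submodule.mem_span_singleton_self e)

variable {ι : Type*} [Fintype ι]

/-- `A♯T₁ + ⋯ + A♯Tₙ`, where `A♯ = A + ℂ·id`. -/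
noncomputable def leftSpan (A : Submodule ℂ (X →L[ℂ] X)) (T : ι → X →L[ℂ] X) :
    Submodule ℂ (X →L[ℂ] X) where
  carrier := {y | ∃ (a : ι → X →L[ℂ] X) (s : ι → ℂ), (∀ i, a i ∈ A) ∧
    y = ∑ i, ((a i).comp (T i) + s i • T i)}
  zero_mem' := ⟨0, 0, fun _ => zero_mem A, by simp⟩
  add_mem' := by
    rintro _ _ ⟨a, s, ha, rfl⟩ ⟨b, t, hb, rfl⟩
    refine ⟨a + b, s + t, fun i => add_mem (ha i) (hb i), ?_⟩
    simp only [Pi.add_apply, ContinuousLinearMap.add_comp, add_smul, ← Finset.sum_add_distrib]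
    exact Finset.sum_congr rfl fun i _ => by abel
  smul_mem' := by
    rintro c _ ⟨a, s, ha, rfl⟩
    refine ⟨c • a, c • s, fun i => A.smul_mem c (ha i), ?_⟩
    simp [Finset.smul_sum, smul_smul]

theorem comp_mem_span_imAdj {A : Submodule ℂ (X →L[ℂ] X)} {T : ι → X →L[ℂ] X}
    {S : X →L[ℂ] X} (hS : S ∈ leftSpan A T) (l : StrongDual ℂ X) :
    l.comp S ∈ Submodule.span ℂ (⋃ i, imAdj (T i)) := by
  obtain ⟨a, s, -, rfl⟩ := hS
  have hmem (i : ι) (m : StrongDual ℂ X) :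
      m.comp (T i) ∈ Submodule.span ℂ (⋃ i, imAdj (T i)) :=
    Submodule.subset_span (Set.mem_iUnion_of_mem i ⟨m, rfl⟩)
  rw [← ContinuousLinearMap.compL_apply ℂ, map_sum]
  refine Submodule.sum_mem _ fun i _ => ?_
  simp only [map_add, map_smul, ContinuousLinearMap.compL_apply, ← ContinuousLinearMap.comp_assoc]
  exact add_mem (hmem i _) (Submodule.smul_mem _ _ (hmem i l))

theorem smulRight_mem_leftSpan {A : Submodule ℂ (X →L[ℂ] X)}
    (hA : ∀ (l : StrongDual ℂ X) (e : X), l.smulRight e ∈ A) {T : ι → X →L[ℂ] X}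
    {μ : StrongDual ℂ X} (hμ : μ ∈ Submodule.span ℂ (⋃ i, imAdj (T i))) (e : X) :
    μ.smulRight e ∈ leftSpan A T := by
  classical
  let smulRightE : StrongDual ℂ X →ₗ[ℂ] X →L[ℂ] X :=
    (ContinuousLinearMap.smulRightL ℂ X X).flip e
  refine (Submodule.span_le (p := (leftSpan A T).comap smulRightE)).2 ?_ hμ
  rintro _ ⟨_, ⟨i, rfl⟩, l, rfl⟩
  refine ⟨Pi.single i (l.smulRight e), 0, fun j => ?_, ?_⟩
  · rcases eq_or_ne j i with rfl | hj
    · simpa using hA l e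
    · simp [hj, zero_mem]
  · rw [Finset.sum_eq_single i (fun j _ hj => by simp [hj]) (by simp)]
    ext x
    simp [smulRightE]

theorem exists_mem_imAdj_smulRight (μ : StrongDual ℂ X) :
    ∃ e : X, μ ∈ imAdj (μ.smulRight e) := by
  rcases subsingleton_or_nontrivial X with hX | hX
  · exact ⟨0, 0, Subsingleton.elim _ _⟩
  obtain ⟨e, he⟩ := exists_ne (0 : X)
  obtain ⟨g, hg⟩ := SeparatingDual.exists_eq_one (R := ℂ) he
  exact ⟨e, g, by ext x; simp [hg]⟩

end

theorem dual_comp_topGenIdeal_eq_closedSpan_imAdj_general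
    (n : ℕ) (T : Fin n → (E →L[ℂ] E))
    (I : Set (E →L[ℂ] E))
    (hI : I = closure {y : E →L[ℂ] E | ∃ (a : Fin n → (E →L[ℂ] E)) (s : Fin n → ℂ),
      (∀ i, a i ∈ ApproxOps E) ∧ y = ∑ i, ((a i).comp (T i) + s i • T i)}) :
    (⋃ S ∈ I, imAdj S) =
      closure (Submodule.span ℂ (⋃ i, imAdj (T i)) : Set (StrongDual ℂ E)) := by
  rw [← coe_approxOpsSubmodule] at hI
  change I = closure (leftSpan (approxOpsSubmodule E) T) at hI
  subst hI
  ext μ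
  simp only [Set.mem_iUnion]
  constructor
  · rintro ⟨S, hS, l, rfl⟩
    exact map_mem_closure (ContinuousLinearMap.compL ℂ E E ℂ l).continuous hS
      fun S hS => comp_mem_span_imAdj hS l
  · intro hμ
    obtain ⟨e, he⟩ := exists_mem_imAdj_smulRight μ
    refine ⟨μ.smulRight e, ?_, he⟩
    exact map_mem_closure (f := fun ν : StrongDual ℂ E => ν.smulRight e)
      ((ContinuousLinearMap.smulRightL ℂ E E).flip e).continuous hμ
      fun ν hν => smulRight_mem_leftSpan smulRight_mem_approxOpsSubmodule hν e

/-- Let `T₁, …, Tₙ ∈ 𝒜(E)` and let `I` be the closed left ideal of `𝒜(E)`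
topologically generated by `T₁, …, Tₙ` (the closure of `𝒜(E)♯T₁ + ⋯ + 𝒜(E)♯Tₙ`). Then
`E′ ∘ I = ⋃_{T ∈ I} im T′` equals the closed linear span of `im T₁′ + ⋯ + im Tₙ′`. -/
theorem dual_comp_topGenIdeal_eq_closedSpan_imAdj
    (n : ℕ) (T : Fin n → (E →L[ℂ] E)) (hT : ∀ i, T i ∈ ApproxOps E)
    (I : Set (E →L[ℂ] E))
    (hI : I = closure {y : E →L[ℂ] E | ∃ (a : Fin n → (E →L[ℂ] E)) (s : Fin n → ℂ),
      (∀ i, a i ∈ ApproxOps E) ∧ y = ∑ i, ((a i).comp (T i) + s i • T i)}) :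
    (⋃ S ∈ I, imAdj S) =
      closure (Submodule.span ℂ (⋃ i, imAdj (T i)) : Set (StrongDual ℂ E)) :=
  dual_comp_topGenIdeal_eq_closedSpan_imAdj_general n T I hI
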